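/- For every vector a in R^3, the sum over all eight sign choices (s_x, s_y, s_z) in {+1,-1}^3 of Θ(v_{s_x s_y s_z} · a) is at most 4·|a|, where Θ(x) = max(x, 0). -/

import Mathlib

/-!
Since `v_{-s} = -v_s`, the terms for `s` and `-s` add up to `|v_s · a|`, so the sum is half of
`∑ₛ |v_s · a|`. By Cauchy–Schwarz this is at most `√8 · (∑ₛ (v_s · a)²)^(1/2)`, and the eight
vertices form a tight frame: `∑ₛ (v_s · a)² = 8 |a|²`, because each mixed product `s_j s_k` with
`j ≠ k` changes sign when `s_j` is flipped. Altogether the sum is at most `½ · √8 · √8 |a| = 4 |a|`.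
-/

open RealInnerProductSpace

/-- The vertex `(s_x, s_y, s_z)` of the cube `[-1,1]^3`, signs encoded by booleans. -/
noncomputable def cubeVtx (s : Fin 3 → Bool) : EuclideanSpace ℝ (Fin 3) :=
  WithLp.toLp 2 fun k => if s k then 1 else -1

section Sums

variable {α : Type*} [Fintype α]

lemma sum_max_zero_eq_sum_abs_div_two (f : α → ℝ) (σ : α ≃ α) (hσ : ∀ x, f (σ x) = -f x) :
    ∑ x, max (f x) 0 = (∑ x, |f x|) / 2 := by
  have hneg : ∑ x, max (f x) 0 = ∑ x, max (-f x) 0 := by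
    rw [← σ.sum_comp]
    simp only [hσ]
  have hsum : ∑ x, (max (f x) 0 + max (-f x) 0) = ∑ x, |f x| := by
    simp only [max_zero_add_max_neg_zero_eq_abs_self]
  rw [Finset.sum_add_distrib, ← hneg] at hsum
  linarith

lemma sum_abs_le_sqrt_card_mul_sum_sq (f : α → ℝ) :
    ∑ x, |f x| ≤ √(Fintype.card α * ∑ x, f x ^ 2) :=
  Real.le_sqrt_of_sq_le <| by
    simpa only [sq_abs, Finset.card_univ] using
      sq_sum_le_card_mul_sum_sq (s := Finset.univ) (f := fun x => |f x|)

end Sums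

section SignVectors

variable {ι : Type*} [Fintype ι] [DecidableEq ι]

lemma sum_sign_mul_sign (j k : ι) :
    ∑ s : ι → Bool, ((if s j then 1 else -1) * (if s k then 1 else -1) : ℝ) =
      if j = k then 2 ^ Fintype.card ι else 0 := by
  split_ifs with hjk
  · have hsq (b : Bool) : ((if b then 1 else -1) * (if b then 1 else -1) : ℝ) = 1 := by
      cases b <;> norm_num
    simp [hjk, hsq]
  · let flip : (ι → Bool) ≃ (ι → Bool) :=
      Function.Involutive.toPerm (fun s => Function.update s j (!s j)) fun s => by simp
    have hflip (s : ι → Bool) : ((if flip s j then 1 else -1) * (if flip s k then 1 else -1) : ℝ) =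
        -((if s j then 1 else -1) * (if s k then 1 else -1)) := by
      have hj : flip s j = !s j := Function.update_self ..
      have hk : flip s k = s k := Function.update_of_ne (Ne.symm hjk) ..
      rw [hj, hk]
      cases s j <;> cases s k <;> norm_num
    have := flip.sum_comp fun s => ((if s j then 1 else -1) * (if s k then 1 else -1) : ℝ)
    simp only [hflip, Finset.sum_neg_distrib] at this
    linarith

lemma sum_sq_sum_sign_mul (a : ι → ℝ) :
    ∑ s : ι → Bool, (∑ k, (if s k then 1 else -1) * a k) ^ 2 =
      2 ^ Fintype.card ι * ∑ k, a k ^ 2 := by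
  calc ∑ s : ι → Bool, (∑ k, (if s k then 1 else -1) * a k) ^ 2
      = ∑ j, ∑ k, a j * a k *
          ∑ s : ι → Bool, ((if s j then 1 else -1) * (if s k then 1 else -1) : ℝ) := by
        simp only [sq, Finset.sum_mul_sum]
        simp only [Finset.mul_sum]
        rw [Finset.sum_comm]
        refine Finset.sum_congr rfl fun j _ => ?_
        rw [Finset.sum_comm]
        exact Finset.sum_congr rfl fun k _ => Finset.sum_congr rfl fun s _ => by ring
    _ = 2 ^ Fintype.card ι * ∑ k, a k ^ 2 := by
        simp only [sum_sign_mul_sign]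
        simp only [mul_ite, mul_zero, Finset.sum_ite_eq, Finset.mem_univ, if_true]
        rw [Finset.mul_sum]
        exact Finset.sum_congr rfl fun k _ => by ring

end SignVectors

lemma cubeVtx_not (s : Fin 3 → Bool) : cubeVtx (fun k => !s k) = -cubeVtx s := by
  ext k
  by_cases h : s k <;> simp [cubeVtx, h]

lemma inner_cubeVtx (s : Fin 3 → Bool) (a : EuclideanSpace ℝ (Fin 3)) :
    ⟪cubeVtx s, a⟫ = ∑ k, (if s k then 1 else -1) * a k := by
  simp [cubeVtx, PiLp.inner_apply, mul_comm]

lemma sum_inner_cubeVtx_sq (a : EuclideanSpace ℝ (Fin 3)) :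
    ∑ s, ⟪cubeVtx s, a⟫ ^ 2 = 8 * ‖a‖ ^ 2 := by
  simp only [inner_cubeVtx, sum_sq_sum_sign_mul, EuclideanSpace.norm_sq_eq, Real.norm_eq_abs,
    sq_abs, Fintype.card_fin]
  norm_num

theorem sum_posPart_inner_cubeVtx_le (a : EuclideanSpace ℝ (Fin 3)) :
    ∑ s : Fin 3 → Bool, max ⟪cubeVtx s, a⟫ 0 ≤ 4 * ‖a‖ := by
  have hflip (s : Fin 3 → Bool) : ⟪cubeVtx (fun k => !s k), a⟫ = -⟪cubeVtx s, a⟫ := by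
    rw [cubeVtx_not, inner_neg_left]
  calc ∑ s, max ⟪cubeVtx s, a⟫ 0 = (∑ s, |⟪cubeVtx s, a⟫|) / 2 :=
        sum_max_zero_eq_sum_abs_div_two _
          (Function.Involutive.toPerm (fun s k => !s k) fun s => by simp) hflip
    _ ≤ √(8 * (8 * ‖a‖ ^ 2)) / 2 := by
        gcongr
        simpa [sum_inner_cubeVtx_sq] using sum_abs_le_sqrt_card_mul_sum_sq fun s => ⟪cubeVtx s, a⟫
    _ = 4 * ‖a‖ := by
        rw [show 8 * (8 * ‖a‖ ^ 2) = (8 * ‖a‖) ^ 2 by ring, Real.sqrt_sq (by positivity)]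
        ring
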